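/- arXiv:2310.18124 — 2 statements merged into one kernel-verified Lean document; each statement's English description precedes it below -/
import Mathlib

section
/- Let F be a group and N1 a normal subgroup of F. Then the subgroup N defined as the intersection, over all φ ∈ Aut(F), of the images φ(N1), is a normal subgroup of F that is invariant under every automorphism of F (i.e., φ(N) = N for all φ ∈ Aut(F), so N is characteristic). If moreover F is finitely generated and N1 has finite index in F, then N has finite index in F. -/
/-!
Since `x ∈ φ(N₁)` iff `φ⁻¹ x ∈ N₁`, the intersection `N` consists of the `x` whose whole
`Aut(F)`-orbit lies in `N₁`; this description is `Aut(F)`-invariant, so `N` is characteristic,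
hence normal. Each `φ(N₁)` is the preimage, under `F →* Perm(F ⧸ N₁)` precomposed with `φ⁻¹`,
of the stabiliser of the trivial coset. When `F` is finitely generated and `F ⧸ N₁` is finite
there are only finitely many homomorphisms `F →* Perm(F ⧸ N₁)`, so `N` is a finite
intersection of subgroups of finite index.
-/

theorem MonoidHom.finite_of_fg (G P : Type*) [Group G] [Monoid P] [Group.FG G] [Finite P] :
    Finite (G →* P) := by
  obtain ⟨S, hS⟩ := Group.FG.out (G := G)
  exact Finite.of_injective (fun f (s : S) => f s) fun f g h =>
    MonoidHom.eq_of_eqOn_dense hS fun x hx => congrFun h ⟨x, hx⟩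

namespace Subgroup

variable {G : Type*} [Group G]

theorem comap_toPermHom_stabilizer {X : Type*} [MulAction G X] (x : X) :
    (MulAction.stabilizer (Equiv.Perm X) x).comap (MulAction.toPermHom G X) =
      MulAction.stabilizer G x :=
  rfl

theorem finite_range_comap_of_finiteIndex {F : Type*} [Group F] [Group.FG G]
    (H : Subgroup F) [H.FiniteIndex] : (Set.range fun f : G →* F => H.comap f).Finite := by
  have : Finite (F ⧸ H) := H.finite_quotient_of_finiteIndex
  have : Finite (G →* Equiv.Perm (F ⧸ H)) := MonoidHom.finite_of_fg _ _
  refine (Set.finite_range fun f : G →* Equiv.Perm (F ⧸ H) =>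
    (MulAction.stabilizer _ ((1 : F) : F ⧸ H)).comap f).subset ?_
  rintro _ ⟨f, rfl⟩
  refine ⟨(MulAction.toPermHom F (F ⧸ H)).comp f, ?_⟩
  dsimp only
  rw [← comap_comap, comap_toPermHom_stabilizer, MulAction.stabilizer_quotient]

theorem finiteIndex_iInf_of_finite_range {ι : Type*} {f : ι → Subgroup G}
    (hf : (Set.range f).Finite) (h : ∀ i, (f i).FiniteIndex) : (⨅ i, f i).FiniteIndex := by
  have := hf.to_subtype
  rw [← sInf_range, sInf_eq_iInf']
  exact finiteIndex_iInf fun ⟨_, i, hi⟩ => hi ▸ h i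

theorem mem_iInf_map_mulAut {H : Subgroup G} {x : G} :
    x ∈ ⨅ φ : MulAut G, H.map φ.toMonoidHom ↔ ∀ φ : MulAut G, φ.symm x ∈ H := by
  simp only [mem_iInf, mem_map_equiv]

theorem characteristic_iInf_map_mulAut (H : Subgroup G) :
    (⨅ φ : MulAut G, H.map φ.toMonoidHom).Characteristic := by
  refine characteristic_iff_comap_le.mpr fun φ x hx => mem_iInf_map_mulAut.mpr fun ψ => ?_
  simpa [MulAut.mul_def] using mem_iInf_map_mulAut.mp hx (φ * ψ)

end Subgroup

theorem stmt2_general (F : Type) [Group F] (N₁ : Subgroup F)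
    (N : Subgroup F) (hN : N = ⨅ φ : MulAut F, Subgroup.map φ.toMonoidHom N₁) :
    N.Normal ∧ (∀ φ : MulAut F, Subgroup.map φ.toMonoidHom N = N) ∧
      (Group.FG F → N₁.FiniteIndex → N.FiniteIndex) := by
  subst hN
  have := N₁.characteristic_iInf_map_mulAut
  refine ⟨inferInstance, Subgroup.characteristic_iff_map_eq.mp this, fun _ _ => ?_⟩
  have hmap (φ : MulAut F) : N₁.map φ.toMonoidHom = N₁.comap φ.symm.toMonoidHom :=
    Subgroup.map_equiv_eq_comap_symm' _ _
  simp only [hmap]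
  refine Subgroup.finiteIndex_iInf_of_finite_range
    ((N₁.finite_range_comap_of_finiteIndex (G := F)).subset ?_) fun φ => ⟨?_⟩
  · rintro _ ⟨φ, rfl⟩
    exact ⟨_, rfl⟩
  · rw [Subgroup.index_comap_of_surjective _ φ.symm.surjective]
    exact Subgroup.FiniteIndex.index_ne_zero

/-- Let `N₁` be a normal subgroup of a group `F`, and let
`N = ⋂_{φ ∈ Aut F} φ(N₁)`.  Then `N` is normal, invariant under every automorphism of `F`
(i.e. characteristic), and if moreover `F` is finitely generated and `N₁` has finite index,
then `N` has finite index. -/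
theorem stmt2 (F : Type) [Group F] (N₁ : Subgroup F) [N₁.Normal]
    (N : Subgroup F) (hN : N = ⨅ φ : MulAut F, Subgroup.map φ.toMonoidHom N₁) :
    N.Normal ∧ (∀ φ : MulAut F, Subgroup.map φ.toMonoidHom N = N) ∧
      (Group.FG F → N₁.FiniteIndex → N.FiniteIndex) :=
  stmt2_general F N₁ N hN
end

section
/- Let F be the genus-2 surface group with generators x1, y1, x2, y2. Each of the following five assignments on the generators extends to an automorphism of F: σ₁ : (x1,y1,x2,y2) ↦ (x1·y1, y1, x2, y2); σ₂ : (x1,y1,x2,y2) ↦ (x1, y1·x1⁻¹, x2, y2); σ₃ : (x1,y1,x2,y2) ↦ (x2⁻¹·y1·x1, y1, x2, x2⁻¹·y1·y2); σ₄ : (x1,y1,x2,y2) ↦ (x1, y1, x2·y2⁻¹, y2); σ₅ : (x1,y1,x2,y2) ↦ (x1, y1, x2, y2·x2⁻¹). Moreover, the inverse of σⱼ is the automorphism given on generators by: σ₁⁻¹ : ↦ (x1·y1⁻¹, y1, x2, y2); σ₂⁻¹ : ↦ (x1, y1·x1, x2, y2); σ₃⁻¹ : ↦ (y1⁻¹·x2·x1,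 y1, x2, y1⁻¹·x2·y2); σ₄⁻¹ : ↦ (x1, y1, x2·y2, y2); σ₅⁻¹ : ↦ (x1, y1, x2, y2·x2). -/
open scoped commutatorElement

/-- The single relator `[x₁,y₁]·[x₂,y₂]` of the genus-2 surface group, inside the free
group on four generators. -/
def surfaceRels : Set (FreeGroup (Fin 4)) :=
  {⁅FreeGroup.of (0 : Fin 4), FreeGroup.of 1⁆ * ⁅FreeGroup.of (2 : Fin 4), FreeGroup.of 3⁆}

/-- The genus-2 surface group, presented on generators `x₁, y₁, x₂, y₂` with the single
relator `[x₁,y₁]·[x₂,y₂]`. -/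
abbrev SurfaceGroup : Type := PresentedGroup surfaceRels

def x₁ : SurfaceGroup := PresentedGroup.of 0
def y₁ : SurfaceGroup := PresentedGroup.of 1
def x₂ : SurfaceGroup := PresentedGroup.of 2
def y₂ : SurfaceGroup := PresentedGroup.of 3

/-!
Each assignment sends the relator `⁅x₁, y₁⁆ * ⁅x₂, y₂⁆` to a conjugate of itself, so it defines an
endomorphism of the surface group. For `σ₁, σ₂, σ₄, σ₅` each commutator is fixed, because the
factor appended to one entry commutes with the other entry of the same commutator. For `σ₃` and
its inverse, both commutators are twisted by an element `w` commuting with `y₁⁻¹ * x₂`, which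
moves past the middle of the product and conjugates the relator by `w`. The inverses are then
checked on generators.
-/

section Commutator

variable {G : Type*} [Group G] {a b c d w : G}

theorem commutatorElement_mul_left_of_commute (h : Commute w b) : ⁅a * w, b⁆ = ⁅a, b⁆ := by
  rw [commutatorElement_def, commutatorElement_def, mul_inv_rev, mul_assoc a w b, h.eq]
  group

theorem commutatorElement_mul_right_of_commute (h : Commute w a) : ⁅a, b * w⁆ = ⁅a, b⁆ := by
  rw [← commutatorElement_inv, commutatorElement_mul_left_of_commute h, commutatorElement_inv]

theorem commutatorElement_mul_commutatorElement_eq_conj (h : Commute w (b⁻¹ * c)) :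
    ⁅w * a, b⁆ * ⁅c, w * d⁆ = w * (⁅a, b⁆ * ⁅c, d⁆) * w⁻¹ := by
  have key : w⁻¹ * (b⁻¹ * c) * w = b⁻¹ * c := by rw [h.inv_left.eq, inv_mul_cancel_right]
  calc ⁅w * a, b⁆ * ⁅c, w * d⁆
      = w * a * b * a⁻¹ * (w⁻¹ * (b⁻¹ * c) * w) * d * c⁻¹ * d⁻¹ * w⁻¹ := by
        simp only [commutatorElement_def]; group
    _ = w * (⁅a, b⁆ * ⁅c, d⁆) * w⁻¹ := by
        rw [key]; simp only [commutatorElement_def]; group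

end Commutator

namespace SurfaceGroup

theorem relator_eq_one : ⁅x₁, y₁⁆ * ⁅x₂, y₂⁆ = 1 :=
  PresentedGroup.one_of_mem rfl

variable {G : Type*} [Group G]

def lift (a b c d : G) (h : ⁅a, b⁆ * ⁅c, d⁆ = 1) : SurfaceGroup →* G :=
  PresentedGroup.toGroup (f := ![a, b, c, d]) (by rintro r rfl; simpa using h)

section lift

variable (a b c d : G) (h : ⁅a, b⁆ * ⁅c, d⁆ = 1)

@[simp] theorem lift_x₁ : lift a b c d h x₁ = a := PresentedGroup.toGroup.of _
@[simp] theorem lift_y₁ : lift a b c d h y₁ = b := PresentedGroup.toGroup.of _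
@[simp] theorem lift_x₂ : lift a b c d h x₂ = c := PresentedGroup.toGroup.of _
@[simp] theorem lift_y₂ : lift a b c d h y₂ = d := PresentedGroup.toGroup.of _

end lift

@[ext]
theorem hom_ext {f g : SurfaceGroup →* G} (h₁ : f x₁ = g x₁) (h₂ : f y₁ = g y₁)
    (h₃ : f x₂ = g x₂) (h₄ : f y₂ = g y₂) : f = g :=
  PresentedGroup.ext fun i => by fin_cases i <;> assumption

def σ₁ : MulAut SurfaceGroup :=
  (lift (x₁ * y₁) y₁ x₂ y₂ <| by
      rw [commutatorElement_mul_left_of_commute (.refl y₁), relator_eq_one]).toMulEquiv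
    (lift (x₁ * y₁⁻¹) y₁ x₂ y₂ <| by
      rw [commutatorElement_mul_left_of_commute (.inv_left (.refl y₁)), relator_eq_one])
    (by ext <;> simp) (by ext <;> simp)

def σ₂ : MulAut SurfaceGroup :=
  (lift x₁ (y₁ * x₁⁻¹) x₂ y₂ <| by
      rw [commutatorElement_mul_right_of_commute (.inv_left (.refl x₁)),
        relator_eq_one]).toMulEquiv
    (lift x₁ (y₁ * x₁) x₂ y₂ <| by
      rw [commutatorElement_mul_right_of_commute (.refl x₁), relator_eq_one])
    (by ext <;> simp) (by ext <;> simp)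

def σ₃ : MulAut SurfaceGroup :=
  (lift (x₂⁻¹ * y₁ * x₁) y₁ x₂ (x₂⁻¹ * y₁ * y₂) <| by
      rw [commutatorElement_mul_commutatorElement_eq_conj
          (by simpa using (Commute.refl (y₁⁻¹ * x₂)).inv_left),
        relator_eq_one, mul_one, mul_inv_cancel]).toMulEquiv
    (lift (y₁⁻¹ * x₂ * x₁) y₁ x₂ (y₁⁻¹ * x₂ * y₂) <| by
      rw [commutatorElement_mul_commutatorElement_eq_conj (.refl _),
        relator_eq_one, mul_one, mul_inv_cancel])
    (by ext <;> simp [mul_assoc]) (by ext <;> simp [mul_assoc])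

def σ₄ : MulAut SurfaceGroup :=
  (lift x₁ y₁ (x₂ * y₂⁻¹) y₂ <| by
      rw [commutatorElement_mul_left_of_commute (.inv_left (.refl y₂)),
        relator_eq_one]).toMulEquiv
    (lift x₁ y₁ (x₂ * y₂) y₂ <| by
      rw [commutatorElement_mul_left_of_commute (.refl y₂), relator_eq_one])
    (by ext <;> simp) (by ext <;> simp)

def σ₅ : MulAut SurfaceGroup :=
  (lift x₁ y₁ x₂ (y₂ * x₂⁻¹) <| by
      rw [commutatorElement_mul_right_of_commute (.inv_left (.refl x₂)),
        relator_eq_one]).toMulEquiv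
    (lift x₁ y₁ x₂ (y₂ * x₂) <| by
      rw [commutatorElement_mul_right_of_commute (.refl x₂), relator_eq_one])
    (by ext <;> simp) (by ext <;> simp)

end SurfaceGroup

/-- Each of the five assignments `σ₁, …, σ₅` on the generators of the genus-2 surface
group extends to an automorphism, and the inverse automorphisms act on the generators
as indicated. -/
theorem stmt9 :
    ∃ σ₁ σ₂ σ₃ σ₄ σ₅ : MulAut SurfaceGroup,
      (σ₁ x₁ = x₁ * y₁ ∧ σ₁ y₁ = y₁ ∧ σ₁ x₂ = x₂ ∧ σ₁ y₂ = y₂) ∧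
      (σ₂ x₁ = x₁ ∧ σ₂ y₁ = y₁ * x₁⁻¹ ∧ σ₂ x₂ = x₂ ∧ σ₂ y₂ = y₂) ∧
      (σ₃ x₁ = x₂⁻¹ * y₁ * x₁ ∧ σ₃ y₁ = y₁ ∧ σ₃ x₂ = x₂ ∧ σ₃ y₂ = x₂⁻¹ * y₁ * y₂) ∧
      (σ₄ x₁ = x₁ ∧ σ₄ y₁ = y₁ ∧ σ₄ x₂ = x₂ * y₂⁻¹ ∧ σ₄ y₂ = y₂) ∧
      (σ₅ x₁ = x₁ ∧ σ₅ y₁ = y₁ ∧ σ₅ x₂ = x₂ ∧ σ₅ y₂ = y₂ * x₂⁻¹) ∧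
      (σ₁⁻¹ x₁ = x₁ * y₁⁻¹ ∧ σ₁⁻¹ y₁ = y₁ ∧ σ₁⁻¹ x₂ = x₂ ∧ σ₁⁻¹ y₂ = y₂) ∧
      (σ₂⁻¹ x₁ = x₁ ∧ σ₂⁻¹ y₁ = y₁ * x₁ ∧ σ₂⁻¹ x₂ = x₂ ∧ σ₂⁻¹ y₂ = y₂) ∧
      (σ₃⁻¹ x₁ = y₁⁻¹ * x₂ * x₁ ∧ σ₃⁻¹ y₁ = y₁ ∧ σ₃⁻¹ x₂ = x₂ ∧
        σ₃⁻¹ y₂ = y₁⁻¹ * x₂ * y₂) ∧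
      (σ₄⁻¹ x₁ = x₁ ∧ σ₄⁻¹ y₁ = y₁ ∧ σ₄⁻¹ x₂ = x₂ * y₂ ∧ σ₄⁻¹ y₂ = y₂) ∧
      (σ₅⁻¹ x₁ = x₁ ∧ σ₅⁻¹ y₁ = y₁ ∧ σ₅⁻¹ x₂ = x₂ ∧ σ₅⁻¹ y₂ = y₂ * x₂) := by
  refine ⟨SurfaceGroup.σ₁, SurfaceGroup.σ₂, SurfaceGroup.σ₃, SurfaceGroup.σ₄, SurfaceGroup.σ₅, ?_⟩
  simp [SurfaceGroup.σ₁, SurfaceGroup.σ₂, SurfaceGroup.σ₃, SurfaceGroup.σ₄, SurfaceGroup.σ₅]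
end
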